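/- Let f : ℝⁿ → ℝ be convex and L-smooth. Then ∇f is (1/L)-cocoercive: for all x, y, (∇f(x) − ∇f(y))ᵀ(x − y) ≥ (1/L)‖∇f(x) − ∇f(y)‖². -/

import Mathlib

/-!
Convexity bounds `f` below by its tangent planes and `L`-smoothness bounds it above by the
tangent paraboloids `f a + ⟪∇f a, z - a⟫ + L/2 ‖z - a‖²`. Comparing the two at the gradient step
`z = b - L⁻¹ (∇f b - ∇f a)` sharpens the tangent-plane inequality at `a` by
`‖∇f b - ∇f a‖² / (2L)`; adding this to the same inequality with `a` and `b` swapped gives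
cocoercivity.
-/

open InnerProductSpace

variable {E : Type*} [NormedAddCommGroup E] [InnerProductSpace ℝ E] [CompleteSpace E]

theorem HasGradientAt.hasDerivAt_comp_add_smul {f : E → ℝ} {g a v : E} {t : ℝ}
    (hf : HasGradientAt f g (a + t • v)) :
    HasDerivAt (fun s : ℝ => f (a + s • v)) ⟪g, v⟫_ℝ t := by
  have hline : HasDerivAt (fun s : ℝ => a + s • v) v t := by
    simpa using ((hasDerivAt_id t).smul_const v).const_add a
  have := hf.hasFDerivAt.comp_hasDerivAt t hline
  simp only [toDual_apply_apply] at this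
  exact this

theorem ConvexOn.add_inner_le_of_hasGradientAt {f : E → ℝ} {g a : E}
    (hconv : ConvexOn ℝ Set.univ f) (hf : HasGradientAt f g a) (b : E) :
    f a + ⟪g, b - a⟫_ℝ ≤ f b := by
  have hline : ConvexOn ℝ Set.univ fun t : ℝ => f (a + t • (b - a)) := by
    simpa [Function.comp_def, AffineMap.lineMap_apply, add_comm] using
      hconv.comp_affineMap (AffineMap.lineMap a b)
  have hderiv : HasDerivAt (fun t : ℝ => f (a + t • (b - a))) ⟪g, b - a⟫_ℝ 0 :=
    HasGradientAt.hasDerivAt_comp_add_smul (by rwa [zero_smul, add_zero])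
  have := hline.le_slope_of_hasDerivAt (Set.mem_univ 0) (Set.mem_univ 1) zero_lt_one hderiv
  simp only [slope_def_field, one_smul, zero_smul, add_zero, add_sub_cancel, sub_zero,
    div_one] at this
  linarith

theorem le_add_inner_add_mul_norm_sq_of_lipschitz_gradient {f : E → ℝ} {f' : E → E} {L : ℝ}
    (hgrad : ∀ x, HasGradientAt f (f' x) x) (hlip : ∀ x y, ‖f' x - f' y‖ ≤ L * ‖x - y‖)
    (a b : E) :
    f b ≤ f a + ⟪f' a, b - a⟫_ℝ + L / 2 * ‖b - a‖ ^ 2 := by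
  set v := b - a
  have hderiv (t : ℝ) : HasDerivAt (fun s : ℝ => f (a + s • v)) ⟪f' (a + t • v), v⟫_ℝ t :=
    (hgrad _).hasDerivAt_comp_add_smul
  have hbound (t : ℝ) (ht : 0 ≤ t) :
      ⟪f' (a + t • v), v⟫_ℝ ≤ ⟪f' a, v⟫_ℝ + L * t * ‖v‖ ^ 2 :=
    calc ⟪f' (a + t • v), v⟫_ℝ = ⟪f' a, v⟫_ℝ + ⟪f' (a + t • v) - f' a, v⟫_ℝ := by
          rw [inner_sub_left]; ring
      _ ≤ ⟪f' a, v⟫_ℝ + ‖f' (a + t • v) - f' a‖ * ‖v‖ := by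
          gcongr; exact real_inner_le_norm _ _
      _ ≤ ⟪f' a, v⟫_ℝ + L * ‖a + t • v - a‖ * ‖v‖ := by gcongr; exact hlip _ _
      _ = ⟪f' a, v⟫_ℝ + L * t * ‖v‖ ^ 2 := by
          rw [add_sub_cancel_left, norm_smul, Real.norm_of_nonneg ht]; ring
  have hquad (t : ℝ) : HasDerivAt (fun s : ℝ => f a + s * ⟪f' a, v⟫_ℝ + L / 2 * s ^ 2 * ‖v‖ ^ 2)
      (⟪f' a, v⟫_ℝ + L * t * ‖v‖ ^ 2) t :=
    (((hasDerivAt_mul_const _).const_add _).add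
      (((hasDerivAt_pow 2 t).const_mul (L / 2)).mul_const _)).congr_deriv (by push_cast; ring)
  have := image_le_of_deriv_right_le_deriv_boundary
    (fun t _ => (hderiv t).continuousAt.continuousWithinAt)
    (fun t _ => (hderiv t).hasDerivWithinAt) (by simp)
    (fun t _ => (hquad t).continuousAt.continuousWithinAt)
    (fun t _ => (hquad t).hasDerivWithinAt) (fun t ht => hbound t ht.1)
    (Set.right_mem_Icc.2 zero_le_one)
  simpa [v] using this

theorem ConvexOn.add_inner_add_norm_sub_sq_div_le {f : E → ℝ} {f' : E → E} {L : ℝ} (hL : 0 < L)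
    (hgrad : ∀ x, HasGradientAt f (f' x) x) (hconv : ConvexOn ℝ Set.univ f)
    (hlip : ∀ x y, ‖f' x - f' y‖ ≤ L * ‖x - y‖) (a b : E) :
    f a + ⟪f' a, b - a⟫_ℝ + ‖f' b - f' a‖ ^ 2 / (2 * L) ≤ f b := by
  set d := f' b - f' a
  set z := b - L⁻¹ • d
  have hlower := hconv.add_inner_le_of_hasGradientAt (hgrad a) z
  have hupper := le_add_inner_add_mul_norm_sq_of_lipschitz_gradient hgrad hlip b z
  have hza : z - a = (b - a) - L⁻¹ • d := by simp only [z]; abel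
  have hzb : z - b = -(L⁻¹ • d) := by simp only [z]; abel
  rw [hza, inner_sub_right, real_inner_smul_right] at hlower
  rw [hzb, inner_neg_right, real_inner_smul_right, norm_neg, norm_smul,
    Real.norm_of_nonneg (inv_nonneg.2 hL.le)] at hupper
  have hd : ⟪f' b, d⟫_ℝ - ⟪f' a, d⟫_ℝ = ‖d‖ ^ 2 := by
    rw [← inner_sub_left, real_inner_self_eq_norm_sq]
  have hL0 := hL.ne'
  field_simp at hupper hlower ⊢
  linear_combination 2 * hlower + hupper - 2 * hd

theorem ConvexOn.inv_mul_norm_sub_sq_le_inner {f : E → ℝ} {f' : E → E} {L : ℝ} (hL : 0 < L)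
    (hgrad : ∀ x, HasGradientAt f (f' x) x) (hconv : ConvexOn ℝ Set.univ f)
    (hlip : ∀ x y, ‖f' x - f' y‖ ≤ L * ‖x - y‖) (x y : E) :
    L⁻¹ * ‖f' x - f' y‖ ^ 2 ≤ ⟪f' x - f' y, x - y⟫_ℝ := by
  have hxy := hconv.add_inner_add_norm_sub_sq_div_le hL hgrad hlip x y
  have hyx := hconv.add_inner_add_norm_sub_sq_div_le hL hgrad hlip y x
  rw [norm_sub_rev] at hxy
  have hinner : ⟪f' x - f' y, x - y⟫_ℝ = -⟪f' x, y - x⟫_ℝ - ⟪f' y, x - y⟫_ℝ := by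
    rw [inner_sub_left, ← inner_neg_right, neg_sub]
  rw [hinner]
  linarith [show ‖f' x - f' y‖ ^ 2 / (2 * L) = L⁻¹ * ‖f' x - f' y‖ ^ 2 / 2 by ring]

/-- Baillon–Haddad: for convex `L`-smooth `f`, the gradient is
`(1/L)`-cocoercive. -/
theorem stmt13 {n : ℕ} (L : ℝ) (hL : 0 < L)
    (f : EuclideanSpace ℝ (Fin n) → ℝ)
    (f' : EuclideanSpace ℝ (Fin n) → EuclideanSpace ℝ (Fin n))
    (hgrad : ∀ x, HasGradientAt f (f' x) x)
    (hconv : ConvexOn ℝ Set.univ f)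
    (hlip : ∀ x y, ‖f' x - f' y‖ ≤ L * ‖x - y‖) :
    ∀ x y, (1 / L) * ‖f' x - f' y‖ ^ 2 ≤ (inner ℝ (f' x - f' y) (x - y) : ℝ) := by
  simpa only [one_div] using hconv.inv_mul_norm_sub_sq_le_inner hL hgrad hlip
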